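/- For every integer n ≥ 4 there exists a constant c(n), depending only on n, such that every connected {K_n, S*_n, P_n}-free finite simple graph G satisfies insc(G) ≤ c(n). -/

import Mathlib

open SimpleGraph

/-- `G` contains an induced subgraph isomorphic to `H`. -/
def HasInducedCopy {V W : Type*} (G : SimpleGraph V) (H : SimpleGraph W) : Prop :=
  ∃ f : W ↪ V, ∀ a b : W, G.Adj (f a) (f b) ↔ H.Adj a b

/-- The star `K_{1,m}` (one center plus `m` leaves). -/
def starGraph (m : ℕ) : SimpleGraph (Unit ⊕ Fin m) := completeBipartiteGraph Unit (Fin m)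

/-- `S` induces in `G` a subgraph isomorphic to a path `P_m` on `m ≥ 1` vertices. -/
def IsInducedPathSet {V : Type*} (G : SimpleGraph V) (S : Set V) : Prop :=
  ∃ m : ℕ, 1 ≤ m ∧ Nonempty ((G.induce S) ≃g pathGraph m)

/-- `S` induces in `G` a subgraph isomorphic to a star `K_{1,m}` with `m ≥ 1`. -/
def IsInducedStarSet {V : Type*} (G : SimpleGraph V) (S : Set V) : Prop :=
  ∃ m : ℕ, 1 ≤ m ∧ Nonempty ((G.induce S) ≃g _root_.starGraph m)

/-- `S` consists of a single vertex (i.e. induces `K_1`). -/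
def IsSingletonSet {V : Type*} (S : Set V) : Prop := ∃ v, S = {v}

/-- `S` is the vertex set of an isometric (shortest) path of `G`. -/
def IsIsometricPathSet {V : Type*} (G : SimpleGraph V) (S : Set V) : Prop :=
  ∃ (u v : V) (p : G.Walk u v), p.IsPath ∧ p.length = G.dist u v ∧
    S = {x | x ∈ p.support}

/-- `P` is a family of sets, all satisfying `pred`, whose union is all of `V`. -/
def IsCoverBy {V : Type*} (P : Finset (Set V)) (pred : Set V → Prop) : Prop :=
  (∀ S ∈ P, pred S) ∧ ∀ v : V, ∃ S ∈ P, v ∈ S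

/-- `P` is a cover by sets satisfying `pred`, whose members are pairwise disjoint. -/
def IsPartitionBy {V : Type*} (P : Finset (Set V)) (pred : Set V → Prop) : Prop :=
  IsCoverBy P pred ∧ ∀ S ∈ P, ∀ T ∈ P, S ≠ T → ∀ v, v ∈ S → v ∉ T

/-- Minimum cardinality of a cover by sets satisfying `pred`. -/
noncomputable def coverNumber {V : Type*} (pred : Set V → Prop) : ℕ :=
  sInf {k | ∃ P : Finset (Set V), P.card = k ∧ IsCoverBy P pred}

/-- Minimum cardinality of a partition into sets satisfying `pred`. -/
noncomputable def partitionNumber {V : Type*} (pred : Set V → Prop) : ℕ :=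
  sInf {k | ∃ P : Finset (Set V), P.card = k ∧ IsPartitionBy P pred}

/-- The induced SP-cover number. -/
noncomputable def inspc {V : Type*} (G : SimpleGraph V) : ℕ :=
  coverNumber (fun S => IsInducedStarSet G S ∨ IsInducedPathSet G S)

/-- The induced SP-partition number. -/
noncomputable def inspp {V : Type*} (G : SimpleGraph V) : ℕ :=
  partitionNumber (fun S => IsInducedStarSet G S ∨ IsInducedPathSet G S)

/-- The induced star cover number. -/
noncomputable def insc {V : Type*} (G : SimpleGraph V) : ℕ :=
  coverNumber (fun S => IsInducedStarSet G S ∨ IsSingletonSet S)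

/-- The induced star partition number. -/
noncomputable def insp {V : Type*} (G : SimpleGraph V) : ℕ :=
  partitionNumber (fun S => IsInducedStarSet G S ∨ IsSingletonSet S)

/-- The induced path cover number. -/
noncomputable def inpc {V : Type*} (G : SimpleGraph V) : ℕ :=
  coverNumber (fun S => IsInducedPathSet G S)

/-- The induced path partition number. -/
noncomputable def inpp {V : Type*} (G : SimpleGraph V) : ℕ :=
  partitionNumber (fun S => IsInducedPathSet G S)

/-- The isometric path cover number. -/
noncomputable def ispc {V : Type*} (G : SimpleGraph V) : ℕ :=
  coverNumber (fun S => IsIsometricPathSet G S)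

/-- The isometric path partition number. -/
noncomputable def ispp {V : Type*} (G : SimpleGraph V) : ℕ :=
  partitionNumber (fun S => IsIsometricPathSet G S)

/-- `S*_n` : center `x = inl ()`, middle vertices `y i = inr (inl i)`,
leaves `z i = inr (inr i)`; edges `x yᵢ` and `yᵢ zᵢ`. -/
def SStar (n : ℕ) : SimpleGraph (Unit ⊕ Fin n ⊕ Fin n) :=
  SimpleGraph.fromRel (fun a b =>
    (∃ i : Fin n, a = Sum.inl () ∧ b = Sum.inr (Sum.inl i)) ∨
    (∃ i : Fin n, a = Sum.inr (Sum.inl i) ∧ b = Sum.inr (Sum.inr i)))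

/-- `S̃_n` : `S*_n` together with the edges `x zᵢ`. -/
def STilde (n : ℕ) : SimpleGraph (Unit ⊕ Fin n ⊕ Fin n) :=
  SimpleGraph.fromRel (fun a b =>
    (∃ i : Fin n, a = Sum.inl () ∧ b = Sum.inr (Sum.inl i)) ∨
    (∃ i : Fin n, a = Sum.inr (Sum.inl i) ∧ b = Sum.inr (Sum.inr i)) ∨
    (∃ i : Fin n, a = Sum.inl () ∧ b = Sum.inr (Sum.inr i)))

/-- `F⁽¹⁾_n` : vertices `x₁ = inl 0`, `x₂ = inl 1`, `yᵢ = inr (inl i)`, `zᵢ = inr (inr i)`;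
edges `x₁x₂`, `x₁y₁`, `x₁z₁`, and two paths `y₁⋯yₙ`, `z₁⋯zₙ`. -/
def F1 (n : ℕ) : SimpleGraph (Fin 2 ⊕ Fin n ⊕ Fin n) :=
  SimpleGraph.fromRel (fun a b =>
    (a = Sum.inl 0 ∧ b = Sum.inl 1) ∨
    (∃ j : Fin n, (j : ℕ) = 0 ∧ a = Sum.inl 0 ∧ b = Sum.inr (Sum.inl j)) ∨
    (∃ j : Fin n, (j : ℕ) = 0 ∧ a = Sum.inl 0 ∧ b = Sum.inr (Sum.inr j)) ∨
    (∃ i j : Fin n, (i : ℕ) + 1 = (j : ℕ) ∧ a = Sum.inr (Sum.inl i) ∧ b = Sum.inr (Sum.inl j)) ∨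
    (∃ i j : Fin n, (i : ℕ) + 1 = (j : ℕ) ∧ a = Sum.inr (Sum.inr i) ∧ b = Sum.inr (Sum.inr j)))

/-- `F⁽²⁾_n` : vertex `x₁ = inl ()`, `yᵢ = inr (inl i)`, `zᵢ = inr (inr i)`;
edges `x₁y₁`, `x₁z₁`, `y₁z₁`, and two paths `y₁⋯yₙ`, `z₁⋯zₙ`. -/
def F2 (n : ℕ) : SimpleGraph (Unit ⊕ Fin n ⊕ Fin n) :=
  SimpleGraph.fromRel (fun a b =>
    (∃ j : Fin n, (j : ℕ) = 0 ∧ a = Sum.inl () ∧ b = Sum.inr (Sum.inl j)) ∨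
    (∃ j : Fin n, (j : ℕ) = 0 ∧ a = Sum.inl () ∧ b = Sum.inr (Sum.inr j)) ∨
    (∃ i j : Fin n, (i : ℕ) = 0 ∧ (j : ℕ) = 0 ∧ a = Sum.inr (Sum.inl i) ∧ b = Sum.inr (Sum.inr j)) ∨
    (∃ i j : Fin n, (i : ℕ) + 1 = (j : ℕ) ∧ a = Sum.inr (Sum.inl i) ∧ b = Sum.inr (Sum.inl j)) ∨
    (∃ i j : Fin n, (i : ℕ) + 1 = (j : ℕ) ∧ a = Sum.inr (Sum.inr i) ∧ b = Sum.inr (Sum.inr j)))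

/-- `F⁽³⁾_n` : vertices `xᵢ = inl i`, `yᵢ = inr (inl i)`, `zᵢ = inr (inr i)`;
edges `xᵢy₁`, `xᵢz₁` for all `i`, and two paths `y₁⋯yₙ`, `z₁⋯zₙ`. -/
def F3 (n : ℕ) : SimpleGraph (Fin n ⊕ Fin n ⊕ Fin n) :=
  SimpleGraph.fromRel (fun a b =>
    (∃ (i j : Fin n), (j : ℕ) = 0 ∧ a = Sum.inl i ∧ b = Sum.inr (Sum.inl j)) ∨
    (∃ (i j : Fin n), (j : ℕ) = 0 ∧ a = Sum.inl i ∧ b = Sum.inr (Sum.inr j)) ∨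
    (∃ i j : Fin n, (i : ℕ) + 1 = (j : ℕ) ∧ a = Sum.inr (Sum.inl i) ∧ b = Sum.inr (Sum.inl j)) ∨
    (∃ i j : Fin n, (i : ℕ) + 1 = (j : ℕ) ∧ a = Sum.inr (Sum.inr i) ∧ b = Sum.inr (Sum.inr j)))

/-- `F⁽⁴⁾_n` : `F⁽³⁾_n` with only `x₁, x₂` kept (no edge `x₁x₂`). -/
def F4 (n : ℕ) : SimpleGraph (Fin 2 ⊕ Fin n ⊕ Fin n) :=
  SimpleGraph.fromRel (fun a b =>
    (∃ (i : Fin 2) (j : Fin n), (j : ℕ) = 0 ∧ a = Sum.inl i ∧ b = Sum.inr (Sum.inl j)) ∨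
    (∃ (i : Fin 2) (j : Fin n), (j : ℕ) = 0 ∧ a = Sum.inl i ∧ b = Sum.inr (Sum.inr j)) ∨
    (∃ i j : Fin n, (i : ℕ) + 1 = (j : ℕ) ∧ a = Sum.inr (Sum.inl i) ∧ b = Sum.inr (Sum.inl j)) ∨
    (∃ i j : Fin n, (i : ℕ) + 1 = (j : ℕ) ∧ a = Sum.inr (Sum.inr i) ∧ b = Sum.inr (Sum.inr j)))

/-- `F⁽⁵⁾_n` : `F⁽⁴⁾_n` plus the edge `x₁x₂`. -/
def F5 (n : ℕ) : SimpleGraph (Fin 2 ⊕ Fin n ⊕ Fin n) :=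
  SimpleGraph.fromRel (fun a b =>
    (a = Sum.inl 0 ∧ b = Sum.inl 1) ∨
    (∃ (i : Fin 2) (j : Fin n), (j : ℕ) = 0 ∧ a = Sum.inl i ∧ b = Sum.inr (Sum.inl j)) ∨
    (∃ (i : Fin 2) (j : Fin n), (j : ℕ) = 0 ∧ a = Sum.inl i ∧ b = Sum.inr (Sum.inr j)) ∨
    (∃ i j : Fin n, (i : ℕ) + 1 = (j : ℕ) ∧ a = Sum.inr (Sum.inl i) ∧ b = Sum.inr (Sum.inl j)) ∨
    (∃ i j : Fin n, (i : ℕ) + 1 = (j : ℕ) ∧ a = Sum.inr (Sum.inr i) ∧ b = Sum.inr (Sum.inr j)))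

/-- The Ramsey number `R(a,b)` : least `R` such that every simple graph on at least `R`
vertices contains a clique of size `a` or an independent set of size `b`. -/
noncomputable def ramseyNumber (a b : ℕ) : ℕ :=
  sInf {R : ℕ | ∀ (m : ℕ) (G : SimpleGraph (Fin m)), R ≤ m →
    (∃ s : Finset (Fin m), s.card = a ∧ ∀ u ∈ s, ∀ v ∈ s, u ≠ v → G.Adj u v) ∨
    (∃ s : Finset (Fin m), s.card = b ∧ ∀ u ∈ s, ∀ v ∈ s, u ≠ v → ¬ G.Adj u v)}

/-- `ξ_{n,i} = ((R(n-1,n)-1)^i - 1)/(R(n-1,n)-2)`. -/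
noncomputable def xi (n i : ℕ) : ℕ :=
  ((ramseyNumber (n - 1) n - 1) ^ i - 1) / (ramseyNumber (n - 1) n - 2)

/-!
Fix a root `r` of a connected graph `G`. Since `G` is `P_n`-free, it has fewer than `n` distance
layers around `r`. Choose in each layer a minimal set dominating the next layer; by minimality
every chosen vertex has a private neighbour two layers below its own dominator. Ramsey's theorem,
applied to the chosen neighbours of one dominator and then to their private neighbours, yields a
`K_{k+1}` or an induced `S*_n` as soon as one dominator has `R(k, R(k+1, n))` of them. So the layers
together contain a set `D` of size bounded in `n` dominating every vertex other than `r`.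
Induction on the clique number (neighbourhoods of `K_{k+1}`-free graphs are `K_k`-free) applied
to this domination bound on each component bounds the chromatic number, and a dominator together
with one colour class of its neighbourhood induces a star.
-/

lemma hasInducedCopy_iff {V W : Type*} {G : SimpleGraph V} {H : SimpleGraph W} :
    HasInducedCopy G H ↔ H ⊴ G :=
  ⟨fun ⟨f, hf⟩ => ⟨⟨f, hf _ _⟩⟩, fun ⟨f⟩ => ⟨f.toEmbedding, fun _ _ => f.map_rel_iff⟩⟩

lemma not_hasInducedCopy_induce {V W : Type*} {G : SimpleGraph V} {H : SimpleGraph W}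
    (h : ¬ HasInducedCopy G H) (s : Set V) : ¬ HasInducedCopy (G.induce s) H := by
  rw [hasInducedCopy_iff] at h ⊢
  exact fun h' => h (h'.trans ⟨Embedding.induce s⟩)

lemma cliqueFree_of_not_hasInducedCopy {V : Type*} {G : SimpleGraph V} {n : ℕ}
    (h : ¬ HasInducedCopy G (completeGraph (Fin n))) : G.CliqueFree n := by
  rw [hasInducedCopy_iff, completeGraph_eq_top, top_isIndContained_iff_top_isContained,
    ← not_cliqueFree_iff_top_isContained, not_not] at h
  exact h

lemma coverNumber_le_card {V : Type*} {pred : Set V → Prop} {P : Finset (Set V)}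
    (hP : IsCoverBy P pred) : coverNumber pred ≤ P.card :=
  Nat.sInf_le ⟨P, rfl, hP⟩

def ramseyBound : ℕ → ℕ → ℕ
  | 0, _ => 0
  | _ + 1, 0 => 0
  | a + 1, b + 1 => ramseyBound a (b + 1) + ramseyBound (a + 1) b + 1

def layerGrowth (k n : ℕ) : ℕ := ramseyBound k (ramseyBound (k + 1) n)

namespace SimpleGraph

variable {V : Type*} {G : SimpleGraph V}

lemma pathGraph_isIndContained_pathGraph {m m' : ℕ} (h : m ≤ m') :
    pathGraph m ⊴ pathGraph m' :=
  ⟨⟨Fin.castLEEmb h, by simp [pathGraph_adj]⟩⟩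

lemma Walk.dist_getVert_of_length_eq_dist {u v : V} {p : G.Walk u v}
    (hp : p.length = G.dist u v) {i : ℕ} (hi : i ≤ p.length) :
    G.dist u (p.getVert i) = i := by
  have hle : G.dist u (p.getVert i) ≤ i := by
    simpa [Walk.take_length, hi] using G.dist_le (p.take i)
  have htri : G.dist u v ≤ G.dist u (p.getVert i) + G.dist (p.getVert i) v :=
    (p.drop i).reachable.dist_triangle_right u
  have hdrop : G.dist (p.getVert i) v ≤ p.length - i := by
    simpa [Walk.drop_length] using G.dist_le (p.drop i)
  omega

lemma Reachable.pathGraph_isIndContained {u v : V} (h : G.Reachable u v) :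
    pathGraph (G.dist u v + 1) ⊴ G := by
  obtain ⟨p, hp⟩ := h.exists_walk_length_eq_dist
  have hdist (i : Fin (G.dist u v + 1)) : G.dist u (p.getVert i) = i :=
    p.dist_getVert_of_length_eq_dist hp (by omega)
  refine ⟨⟨⟨fun i => p.getVert i, fun i j hij => Fin.ext ?_⟩, fun {i j} => ?_⟩⟩
  · simpa [hdist] using congrArg (G.dist u) hij
  · show G.Adj (p.getVert i) (p.getVert j) ↔ _
    rw [pathGraph_adj]
    refine ⟨fun hadj => ?_, ?_⟩
    · have hne : (i : ℕ) ≠ j := fun h => hadj.ne (by rw [Fin.ext h])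
      have := hadj.diff_dist_adj (u := u)
      rw [hdist, hdist] at this
      omega
    · rintro (hij | hij)
      · simpa [← hij] using p.adj_getVert_succ (i := i) (by omega)
      · simpa [← hij] using (p.adj_getVert_succ (i := j) (by omega)).symm

lemma Reachable.dist_add_one_lt {n : ℕ} (hP : ¬ HasInducedCopy G (pathGraph n)) {u v : V}
    (h : G.Reachable u v) : G.dist u v + 1 < n := by
  by_contra! hn
  exact hP (hasInducedCopy_iff.2 ((pathGraph_isIndContained_pathGraph hn).trans
    h.pathGraph_isIndContained))

lemma CliqueFree.induce {k : ℕ} (hK : G.CliqueFree k) (s : Set V) : (G.induce s).CliqueFree k :=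
  hK.comap (Embedding.induce s).isContained

lemma CliqueFree.induce_neighborSet {k : ℕ} (hK : G.CliqueFree (k + 1)) (d : V) :
    (G.induce (G.neighborSet d)).CliqueFree k := by
  rw [cliqueFree_induce_iff, ← Set.univ_inter (G.neighborSet d)]
  exact CliqueFreeOn.of_succ G hK.cliqueFreeOn (Set.mem_univ d)

variable (G) in
theorem exists_isNClique_or_isNIndepSet :
    ∀ (a b : ℕ) (s : Finset V), ramseyBound a b ≤ s.card →
      (∃ t ⊆ s, G.IsNClique a t) ∨ ∃ t ⊆ s, G.IsNIndepSet b t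
  | 0, _, _, _ => .inl ⟨∅, by simp, by simp⟩
  | _ + 1, 0, _, _ => .inr ⟨∅, by simp, by simp [← isNClique_compl]⟩
  | a + 1, b + 1, s, hs => by
    classical
    have hR : ramseyBound (a + 1) (b + 1) = ramseyBound a (b + 1) + ramseyBound (a + 1) b + 1 := by
      simp [ramseyBound]
    obtain ⟨x, hx⟩ : s.Nonempty := Finset.card_pos.1 (by omega)
    set N := (s.erase x).filter (G.Adj x)
    set N' := (s.erase x).filter (¬ G.Adj x ·)
    have hcard : N.card + N'.card = s.card - 1 := by
      rw [Finset.card_filter_add_card_filter_not, Finset.card_erase_of_mem hx]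
    have hNs : N ⊆ s := (Finset.filter_subset _ _).trans (Finset.erase_subset _ _)
    have hN's : N' ⊆ s := (Finset.filter_subset _ _).trans (Finset.erase_subset _ _)
    rcases (by omega : ramseyBound a (b + 1) ≤ N.card ∨ ramseyBound (a + 1) b ≤ N'.card)
      with hN | hN'
    · rcases exists_isNClique_or_isNIndepSet a (b + 1) N hN with ⟨t, htN, ht⟩ | ⟨t, htN, ht⟩
      · refine .inl ⟨insert x t, Finset.insert_subset hx (htN.trans hNs), ht.insert ?_⟩
        exact fun v hv => (Finset.mem_filter.1 (htN hv)).2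
      · exact .inr ⟨t, htN.trans hNs, ht⟩
    · rcases exists_isNClique_or_isNIndepSet (a + 1) b N' hN' with ⟨t, htN, ht⟩ | ⟨t, htN, ht⟩
      · exact .inl ⟨t, htN.trans hN's, ht⟩
      · refine .inr ⟨insert x t, Finset.insert_subset hx (htN.trans hN's), ?_⟩
        rw [← isNClique_compl] at ht ⊢
        refine ht.insert fun v hv => ?_
        obtain ⟨hv, hxv⟩ := Finset.mem_filter.1 (htN hv)
        exact (compl_adj G x v).2 ⟨(Finset.ne_of_mem_erase hv).symm, hxv⟩

lemma sStar_isIndContained {n : ℕ} {x : V} {y z : Fin n → V} (hy : Function.Injective y)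
    (hxy : ∀ i, G.Adj x (y i)) (hyz : ∀ i, G.Adj (y i) (z i))
    (hyy : ∀ i j, ¬ G.Adj (y i) (y j)) (hzz : ∀ i j, ¬ G.Adj (z i) (z j))
    (hyz' : ∀ i j, i ≠ j → ¬ G.Adj (y i) (z j)) (hxz : ∀ i, x ≠ z i ∧ ¬ G.Adj x (z i)) :
    SStar n ⊴ G := by
  have hyz_iff (i j : Fin n) : G.Adj (y i) (z j) ↔ j = i :=
    ⟨fun h => by_contra fun hij => hyz' i j (Ne.symm hij) h, by rintro rfl; exact hyz j⟩
  have hyz_ne (i j : Fin n) : y i ≠ z j := by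
    rintro h
    obtain rfl | hij := eq_or_ne i j
    · exact (hyz i).ne h
    · exact hyy j i (h ▸ hyz j)
  let f : Unit ⊕ Fin n ⊕ Fin n → V := Sum.elim (fun _ => x) (Sum.elim y z)
  have hf : Function.Injective f := by
    rintro (_ | i | i) (_ | j | j) h <;> simp only [f, Sum.elim_inl, Sum.elim_inr] at h
    · rfl
    · exact absurd h (hxy j).ne
    · exact absurd h (hxz j).1
    · exact absurd h.symm (hxy i).ne
    · rw [hy h]
    · exact absurd h (hyz_ne i j)
    · exact absurd h.symm (hxz i).1
    · exact absurd h.symm (hyz_ne j i)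
    · rw [(hyz_iff i j).1 (h ▸ hyz i)]
  refine ⟨⟨⟨f, hf⟩, fun {a b} => ?_⟩⟩
  rcases a with _ | i | i <;> rcases b with _ | j | j <;> simp [f, SStar]
  · exact hxy j
  · exact (hxz j).2
  · exact (hxy i).symm
  · exact hyy i j
  · exact hyz_iff i j
  · exact fun h => (hxz i).2 h.symm
  · rw [adj_comm, hyz_iff]
  · exact hzz i j

def Dominates (G : SimpleGraph V) (D T : Finset V) : Prop := ∀ v ∈ T, ∃ d ∈ D, G.Adj d v

lemma Dominates.exists_subset_private {S T : Finset V}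
    (h : G.Dominates S T) : ∃ D ⊆ S, G.Dominates D T ∧
      ∀ d ∈ D, ∃ z ∈ T, G.Adj d z ∧ ∀ d' ∈ D, d' ≠ d → ¬ G.Adj d' z := by
  classical
  obtain ⟨D, hD, hmin⟩ := Finset.exists_min_image
    (S.powerset.filter (G.Dominates · T)) Finset.card ⟨S, by simpa using h⟩
  rw [Finset.mem_filter, Finset.mem_powerset] at hD
  refine ⟨D, hD.1, hD.2, fun d hd => ?_⟩
  by_contra! hpriv
  have herase : G.Dominates (D.erase d) T := fun v hv => by
    obtain ⟨e, he, hev⟩ := hD.2 v hv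
    by_cases hed : e = d
    · obtain ⟨d', hd', hne, hd'v⟩ := hpriv v hv (hed ▸ hev)
      exact ⟨d', Finset.mem_erase.2 ⟨hne, hd'⟩, hd'v⟩
    · exact ⟨e, Finset.mem_erase.2 ⟨hed, he⟩, hev⟩
  have := hmin (D.erase d) (by simpa using ⟨(Finset.erase_subset d D).trans hD.1, herase⟩)
  exact (Finset.card_erase_lt_of_mem hd).not_ge this

lemma IsIndepSet.not_adj {s : Set V} (hs : G.IsIndepSet s) {a b : V} (ha : a ∈ s) (hb : b ∈ s) :
    ¬ G.Adj a b :=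
  fun h => hs ha hb h.ne h

lemma card_lt_of_forall_exists_private {k n : ℕ} (hK : G.CliqueFree (k + 1))
    (hS : ¬ HasInducedCopy G (SStar n)) {x : V} {F : Finset V} (hxF : ∀ d ∈ F, G.Adj x d)
    (hpriv : ∀ d ∈ F, ∃ z, G.Adj d z ∧ x ≠ z ∧ ¬ G.Adj x z ∧
      ∀ d' ∈ F, d' ≠ d → ¬ G.Adj d' z) :
    F.card < layerGrowth k n := by
  classical
  by_contra! hF
  choose! z hdz hxz hxz' hz using hpriv
  have hzinj : Set.InjOn z F := fun d hd d' hd' h =>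
    by_contra fun hne => hz d hd d' hd' (Ne.symm hne) (h ▸ hdz d' hd')
  obtain ⟨t, htF, ht⟩ | ⟨t, htF, ht⟩ := G.exists_isNClique_or_isNIndepSet k _ F hF
  · exact hK _ (ht.insert fun d hd => hxF d (htF hd))
  obtain ⟨s, hst, hs⟩ | ⟨s, hst, hs⟩ :=
    (G.comap z).exists_isNClique_or_isNIndepSet (k + 1) n t ht.card_eq.ge
  · refine hK (s.image z) ⟨?_, ?_⟩
    · rw [Finset.coe_image, IsClique, (hzinj.mono fun d hd => htF (hst hd)).pairwise_image]
      exact hs.isClique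
    · rw [Finset.card_image_of_injOn (hzinj.mono fun d hd => htF (hst hd)), hs.card_eq]
  · let e := s.equivFinOfCardEq hs.card_eq
    let y : Fin n → V := fun i => e.symm i
    have hyF (i : Fin n) : y i ∈ F := htF (hst (e.symm i).2)
    refine hS (hasInducedCopy_iff.2 (sStar_isIndContained (x := x) (y := y) (z := z ∘ y)
      (Subtype.val_injective.comp e.symm.injective) (fun i => hxF _ (hyF i))
      (fun i => hdz _ (hyF i)) (fun i j => ?_) (fun i j => ?_) (fun i j hij => ?_)
      (fun i => ⟨hxz _ (hyF i), hxz' _ (hyF i)⟩)))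
    · exact ht.isIndepSet.not_adj (hst (e.symm i).2) (hst (e.symm j).2)
    · exact hs.isIndepSet.not_adj (e.symm i).2 (e.symm j).2
    · exact hz _ (hyF j) _ (hyF i) fun h => hij (e.symm.injective (Subtype.val_injective h))

lemma card_le_mul_card_of_dominates {k n : ℕ} (hK : G.CliqueFree (k + 1))
    (hS : ¬ HasInducedCopy G (SStar n)) {A B C : Finset V} (hAB : G.Dominates A B)
    (hBC : ∀ b ∈ B, ∃ z ∈ C, G.Adj b z ∧ ∀ b' ∈ B, b' ≠ b → ¬ G.Adj b' z)
    (hAC : ∀ a ∈ A, ∀ c ∈ C, a ≠ c ∧ ¬ G.Adj a c) :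
    B.card ≤ A.card * layerGrowth k n := by
  classical
  have hB : B ⊆ A.biUnion fun a => B.filter (G.Adj a) := fun b hb => by
    obtain ⟨a, ha, hab⟩ := hAB b hb
    exact Finset.mem_biUnion.2 ⟨a, ha, Finset.mem_filter.2 ⟨hb, hab⟩⟩
  refine (Finset.card_le_card hB).trans (Finset.card_biUnion_le_card_mul _ _ _ fun a ha => ?_)
  refine (card_lt_of_forall_exists_private hK hS (x := a) (fun b hb => (Finset.mem_filter.1 hb).2)
    fun b hb => ?_).le
  obtain ⟨z, hzC, hbz, hz⟩ := hBC b (Finset.mem_filter.1 hb).1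
  exact ⟨z, hbz, (hAC a ha z hzC).1, (hAC a ha z hzC).2,
    fun b' hb' => hz b' (Finset.mem_filter.1 hb').1⟩

open Classical in
/-- Junk value: in a disconnected graph the vertices unreachable from `r` lie in `level r 0`. -/
noncomputable def level [Fintype V] (G : SimpleGraph V) (r : V) (i : ℕ) : Finset V :=
  Finset.univ.filter (G.dist r · = i)

section Levels

variable [Fintype V]

@[simp]
lemma mem_level {r v : V} {i : ℕ} : v ∈ G.level r i ↔ G.dist r v = i := by
  simp [level]

lemma Connected.dominates_level_succ (hG : G.Connected) (r : V) (i : ℕ) :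
    G.Dominates (G.level r i) (G.level r (i + 1)) := by
  intro v hv
  rw [mem_level] at hv
  obtain ⟨p, hp⟩ := hG.exists_walk_length_eq_dist r v
  refine ⟨p.getVert i, mem_level.2 (p.dist_getVert_of_length_eq_dist hp (by omega)), ?_⟩
  simpa [← hv, ← hp, Walk.getVert_length] using p.adj_getVert_succ (i := i) (by omega)

lemma ne_and_not_adj_of_mem_level_of_mem_level_add_two {r a c : V} {i : ℕ}
    (ha : a ∈ G.level r i) (hc : c ∈ G.level r (i + 2)) : a ≠ c ∧ ¬ G.Adj a c := by
  rw [mem_level] at ha hc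
  refine ⟨fun h => by subst h; omega, fun h => ?_⟩
  have := h.diff_dist_adj (u := r)
  omega

lemma Connected.exists_dominating_levels {k n : ℕ} (hG : G.Connected)
    (hK : G.CliqueFree (k + 1)) (hS : ¬ HasInducedCopy G (SStar n)) (r : V) :
    ∃ D : ℕ → Finset V, (∀ i, G.Dominates (D i) (G.level r (i + 1))) ∧
      ∀ i, (D i).card ≤ layerGrowth k n ^ i := by
  choose D hDsub hDdom hDpriv using fun i => (hG.dominates_level_succ r i).exists_subset_private
  refine ⟨D, hDdom, fun i => ?_⟩
  induction i with
  | zero =>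
    refine (Finset.card_le_card ((hDsub 0).trans fun v hv => ?_)).trans (Finset.card_singleton r).le
    rw [mem_level, hG.dist_eq_zero_iff] at hv
    exact Finset.mem_singleton.2 hv.symm
  | succ i ih =>
    have hgrowth := card_le_mul_card_of_dominates hK hS (A := D i) (B := D (i + 1))
      (fun b hb => hDdom i b (hDsub (i + 1) hb)) (hDpriv (i + 1))
      fun a ha c hc => ne_and_not_adj_of_mem_level_of_mem_level_add_two (hDsub i ha) hc
    rw [pow_succ]
    exact hgrowth.trans (Nat.mul_le_mul_right _ ih)

lemma Connected.exists_finset_dominating {k n : ℕ} (hG : G.Connected)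
    (hK : G.CliqueFree (k + 1)) (hS : ¬ HasInducedCopy G (SStar n))
    (hP : ¬ HasInducedCopy G (pathGraph n)) (r : V) :
    ∃ D : Finset V, D.card ≤ ∑ i ∈ Finset.range n, layerGrowth k n ^ i ∧
      ∀ v ≠ r, ∃ d ∈ D, G.Adj d v := by
  classical
  obtain ⟨D, hDdom, hDcard⟩ := hG.exists_dominating_levels hK hS r
  refine ⟨(Finset.range n).biUnion D,
    Finset.card_biUnion_le.trans (Finset.sum_le_sum fun i _ => hDcard i), fun v hv => ?_⟩
  have hlt := (hG.preconnected r v).dist_add_one_lt hP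
  have hpos : G.dist r v ≠ 0 := fun h => hv ((hG.dist_eq_zero_iff.1 h).symm)
  obtain ⟨d, hd, hdv⟩ := hDdom (G.dist r v - 1) v (mem_level.2 (by omega))
  exact ⟨d, Finset.mem_biUnion.2 ⟨_, Finset.mem_range.2 (by omega), hd⟩, hdv⟩

end Levels

/-- Colour `v ≠ r` by a dominator `d` of `v` and the colour of `v` in the neighbourhood of `d`. -/
lemma colorable_of_forall_ne_exists_adj {r : V} {D : Finset V}
    (hD : ∀ v ≠ r, ∃ d ∈ D, G.Adj d v) {Q : ℕ}
    (hN : ∀ d ∈ D, (G.induce (G.neighborSet d)).Colorable Q) :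
    G.Colorable (D.card * Q + 1) := by
  classical
  choose! dom hdomD hdom using hD
  have hsep : ∀ {v w : V} (d d' : V) (hd : d ∈ D) (hd' : d' ∈ D) (hv : G.Adj d v)
      (hw : G.Adj d' w), G.Adj v w → d = d' →
      (hN d hd).some ⟨v, hv⟩ ≠ (hN d' hd').some ⟨w, hw⟩ := by
    rintro v w d _ hd _ hv hw hvw rfl
    exact (hN d hd).some.valid hvw
  let C : G.Coloring (Option (D × Fin Q)) := Coloring.mk
    (fun v => if hv : v = r then none
      else some (⟨dom v, hdomD v hv⟩, (hN _ (hdomD v hv)).some ⟨v, hdom v hv⟩))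
    fun {v w} hvw heq => by
      by_cases hv : v = r <;> by_cases hw : w = r
      · exact hvw.ne (hv.trans hw.symm)
      all_goals simp only [hv, hw, dif_pos, dif_neg, not_false_eq_true, reduceCtorEq,
        Option.some.injEq, Prod.mk.injEq, Subtype.mk.injEq] at heq
      exact hsep _ _ (hdomD v hv) (hdomD w hw) _ _ hvw heq.1 heq.2
  simpa using C.colorable

lemma isInducedStarSet_or_isSingletonSet_insert {d : V} {L : Set V} [Finite L]
    (hdL : ∀ v ∈ L, G.Adj d v) (hL : ∀ u ∈ L, ∀ v ∈ L, ¬ G.Adj u v) :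
    IsInducedStarSet G (insert d L) ∨ IsSingletonSet (insert d L) := by
  obtain rfl | hne := L.eq_empty_or_nonempty
  · exact .inr ⟨d, insert_empty_eq d⟩
  left
  have hdL' : d ∉ L := fun h => G.loopless.irrefl d (hdL d h)
  obtain ⟨m, hm, ⟨e⟩⟩ : ∃ m, 1 ≤ m ∧ Nonempty (L ≃ Fin m) :=
    ⟨_, Nat.one_le_iff_ne_zero.2 (Nat.card_ne_zero.2 ⟨hne.to_subtype, ‹_›⟩), ⟨Finite.equivFin L⟩⟩
  let f : Unit ⊕ Fin m → ↥(insert d L) :=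
    Sum.elim (fun _ => ⟨d, Set.mem_insert d L⟩)
      fun i => ⟨e.symm i, Set.mem_insert_of_mem d (e.symm i).2⟩
  have hf : Function.Bijective f := by
    refine ⟨?_, ?_⟩
    · rintro (_ | i) (_ | j) h <;> simp only [f, Sum.elim_inl, Sum.elim_inr, Subtype.mk.injEq] at h
      · rfl
      · exact absurd (h ▸ (e.symm j).2) hdL'
      · exact absurd (h ▸ (e.symm i).2) hdL'
      · rw [e.symm.injective (Subtype.val_injective h)]
    · rintro ⟨v, rfl | hv⟩
      · exact ⟨.inl (), rfl⟩
      · exact ⟨.inr (e ⟨v, hv⟩), Subtype.ext (by simp [f])⟩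
  refine ⟨m, hm, ⟨(Iso.symm ⟨Equiv.ofBijective f hf, fun {a b} => ?_⟩)⟩⟩
  change G.Adj (f a) (f b) ↔ _
  rcases a with _ | i <;> rcases b with _ | j <;> simp [f, _root_.starGraph]
  · exact hdL _ (e.symm j).2
  · exact (hdL _ (e.symm i).2).symm
  · exact hL _ (e.symm i).2 _ (e.symm j).2

lemma insc_le_of_forall_ne_exists_adj [Fintype V] {r : V} {D : Finset V}
    (hD : ∀ v ≠ r, ∃ d ∈ D, G.Adj d v) {Q : ℕ} (hC : G.Colorable Q) :
    insc G ≤ D.card * Q + 1 := by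
  classical
  obtain ⟨C⟩ := hC
  let star : V × Fin Q → Set V := fun p => insert p.1 {v | G.Adj p.1 v ∧ C v = p.2}
  let P : Finset (Set V) := insert {r} ((D ×ˢ Finset.univ).image star)
  have hcover : IsCoverBy P fun S => IsInducedStarSet G S ∨ IsSingletonSet S := by
    refine ⟨fun S hS => ?_, fun v => ?_⟩
    · obtain rfl | hS := Finset.mem_insert.1 hS
      · exact .inr ⟨r, rfl⟩
      obtain ⟨⟨d, c⟩, -, rfl⟩ := Finset.mem_image.1 hS
      refine isInducedStarSet_or_isSingletonSet_insert (fun v hv => hv.1) ?_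
      rintro u ⟨-, hu⟩ w ⟨-, hw⟩ huw
      exact C.valid huw (hu.trans hw.symm)
    · by_cases hv : v = r
      · exact ⟨{r}, Finset.mem_insert_self _ _, hv⟩
      obtain ⟨d, hd, hdv⟩ := hD v hv
      refine ⟨star (d, C v), Finset.mem_insert_of_mem (Finset.mem_image_of_mem _ ?_),
        .inr ⟨hdv, rfl⟩⟩
      simpa using hd
  calc insc G ≤ P.card := coverNumber_le_card hcover
    _ ≤ ((D ×ˢ Finset.univ).image star).card + 1 := Finset.card_insert_le _ _
    _ ≤ D.card * Q + 1 := by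
      grw [Finset.card_image_le]
      simp

end SimpleGraph

theorem exists_colorable_of_cliqueFree (n : ℕ) : ∀ k : ℕ, ∃ Q : ℕ,
    ∀ (V : Type) [Fintype V] (G : SimpleGraph V), ¬ HasInducedCopy G (SStar n) →
      ¬ HasInducedCopy G (pathGraph n) → G.CliqueFree k → G.Colorable Q
  | 0 => ⟨0, fun _ _ _ _ _ hK => absurd hK not_cliqueFree_zero⟩
  | k + 1 => by
    obtain ⟨Q, hQ⟩ := exists_colorable_of_cliqueFree n k
    refine ⟨(∑ i ∈ Finset.range n, layerGrowth k n ^ i) * Q + 1, fun V _ G hS hP hK => ?_⟩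
    classical
    refine colorable_iff_forall_connectedComponent.2 fun c => ?_
    have hS' := not_hasInducedCopy_induce hS c.supp
    have hP' := not_hasInducedCopy_induce hP c.supp
    obtain ⟨r⟩ := c.connected_toSimpleGraph.nonempty
    obtain ⟨D, hDcard, hD⟩ :=
      c.connected_toSimpleGraph.exists_finset_dominating (hK.induce c.supp) hS' hP' r
    refine (colorable_of_forall_ne_exists_adj hD fun d _ => ?_).mono (by gcongr)
    exact hQ _ _ (not_hasInducedCopy_induce hS' _) (not_hasInducedCopy_induce hP' _)
      ((hK.induce c.supp).induce_neighborSet d)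

theorem statement_7_general (n : ℕ) :
    ∃ c : ℕ, ∀ (V : Type) [Fintype V] (G : SimpleGraph V),
      G.Connected →
      ¬ HasInducedCopy G (completeGraph (Fin n)) →
      ¬ HasInducedCopy G (SStar n) →
      ¬ HasInducedCopy G (pathGraph n) →
      insc G ≤ c := by
  obtain ⟨Q, hQ⟩ := exists_colorable_of_cliqueFree n n
  cases n with
  | zero =>
    exact ⟨0, fun _ _ _ _ hK _ _ =>
      (not_cliqueFree_zero (cliqueFree_of_not_hasInducedCopy hK)).elim⟩
  | succ k =>
    refine ⟨(∑ i ∈ Finset.range (k + 1), layerGrowth k (k + 1) ^ i) * Q + 1,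
      fun V _ G hG hK hS hP => ?_⟩
    have hK := cliqueFree_of_not_hasInducedCopy hK
    obtain ⟨r⟩ := hG.nonempty
    obtain ⟨D, hDcard, hD⟩ := hG.exists_finset_dominating hK hS hP r
    calc insc G ≤ D.card * Q + 1 := insc_le_of_forall_ne_exists_adj hD (hQ V G hS hP hK)
      _ ≤ _ := by gcongr

theorem statement_7 (n : ℕ) (hn : 4 ≤ n) :
    ∃ c : ℕ, ∀ (V : Type) [Fintype V] (G : SimpleGraph V),
      G.Connected →
      ¬ HasInducedCopy G (completeGraph (Fin n)) →
      ¬ HasInducedCopy G (SStar n) →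
      ¬ HasInducedCopy G (pathGraph n) →
      insc G ≤ c :=
  statement_7_general n
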